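/- In the ODE flow setting, fix a Borel probability measure μ on ℝ^ℓ with finite second moment, and for a Borel probability measure ρ on ℝ^d with finite second moment let ν_ρ(t) denote the pushforward of the product measure ρ ⊗ μ under the map (x, θ) ↦ X(t; θ, x). Then there exists a constant C₀ > 0 depending only on the Lipschitz constant C such that for all such ρ, ρ′ and all t ∈ [0,T]: W₂(ν_ρ(t), ν_{ρ′}(t)) ≤ e^{C₀ t/2} · W₂(ρ, ρ′). In particular, if ρ and ρ′ both assign full mass to the closed Euclidean ball of radius δ centered at some x₀ ∈ ℝ^d, then W₂(ν_ρ(t), ν_{ρ′}(t)) ≤ 2δ e^{C₀ t/2}. (This is the ODE specialization of the initial-condition stability estimates Eqs. (C.11)–(C.12) in the proof of Theorem 2.2.) -/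

import Mathlib

/-!
By Grönwall's inequality the initial-condition map `x ↦ X(t; θ, x)` is `e^{Ct}`-Lipschitz, and the
same estimate run backwards in time shows that its inverse is `e^{Ct}`-Lipschitz too. Transporting
a coupling `π` of `ρ, ρ'` along `((x, x'), θ) ↦ (X(t; θ, x), X(t; θ, x'))` under `π ⊗ μ` gives a
coupling of the two pushforwards whose cost is at most `e^{2Ct}` times that of `π`, so `C₀ = 2C`
works. The inverse bound is what keeps this true for a non-integrable cost, whose Bochner integral
is `0`. For measures carried by a ball of radius `δ`, the product coupling costs at most `(2δ)²`.
-/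

open MeasureTheory Set

/-- The squared Wasserstein-2 distance between two Borel measures. -/
noncomputable def W2sq {E : Type*} [MeasurableSpace E] [NormedAddCommGroup E]
    (μ ν : Measure E) : ℝ :=
  sInf {r : ℝ | ∃ π : Measure (E × E), IsProbabilityMeasure π ∧
    π.map Prod.fst = μ ∧ π.map Prod.snd = ν ∧ r = ∫ p, ‖p.1 - p.2‖ ^ 2 ∂π}

/-- The Wasserstein-2 distance. -/
noncomputable def W2 {E : Type*} [MeasurableSpace E] [NormedAddCommGroup E]
    (μ ν : Measure E) : ℝ :=
  Real.sqrt (W2sq μ ν)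

open scoped NNReal

theorem EuclideanSpace.norm_le_sum_abs {n : ℕ} (v : EuclideanSpace ℝ (Fin n)) :
    ‖v‖ ≤ ∑ i, |v i| := by
  rw [EuclideanSpace.norm_eq, Real.sqrt_le_left (Finset.sum_nonneg fun i _ => abs_nonneg _)]
  simpa [Real.norm_eq_abs, sq_abs] using
    Finset.sum_sq_le_sq_sum_of_nonneg (s := Finset.univ) fun i _ => abs_nonneg (v i)

theorem EuclideanSpace.lipschitzWith_of_sum_abs_sub_le {m n : ℕ}
    {g : EuclideanSpace ℝ (Fin m) → EuclideanSpace ℝ (Fin n)} {K : ℝ≥0}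
    (h : ∀ x y, ∑ i, |g x i - g y i| ≤ K * ‖x - y‖) : LipschitzWith K g :=
  LipschitzWith.of_dist_le_mul fun x y => by
    simpa only [dist_eq_norm] using (norm_le_sum_abs (g x - g y)).trans (h x y)

section Gronwall

variable {E : Type*} [NormedAddCommGroup E] [NormedSpace ℝ E]
  {v : ℝ → E → E} {K : ℝ≥0} {a b : ℝ} {Y Y' : ℝ → E}

theorem HasDerivWithinAt.Ici_of_Icc {y : E} {s : ℝ} (h : HasDerivWithinAt Y y (Icc a b) s)
    (hs : s ∈ Ico a b) : HasDerivWithinAt Y y (Ici s) s :=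
  h.mono_of_mem_nhdsWithin <|
    Filter.mem_of_superset (Icc_mem_nhdsGE_of_mem ⟨le_rfl, hs.2⟩) (Icc_subset_Icc hs.1 le_rfl)

theorem dist_le_exp_mul_dist_of_trajectories (hv : ∀ s ∈ Icc a b, LipschitzWith K (v s))
    (hY : ∀ s ∈ Icc a b, HasDerivWithinAt Y (v s (Y s)) (Icc a b) s)
    (hY' : ∀ s ∈ Icc a b, HasDerivWithinAt Y' (v s (Y' s)) (Icc a b) s)
    {t : ℝ} (ht : t ∈ Icc a b) :
    dist (Y t) (Y' t) ≤ Real.exp (K * (t - a)) * dist (Y a) (Y' a) := by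
  rw [mul_comm]
  exact dist_le_of_trajectories_ODE_of_mem (s := fun _ => univ)
    (fun s hs => (hv s (Ico_subset_Icc_self hs)).lipschitzOnWith)
    (fun s hs => (hY s hs).continuousWithinAt)
    (fun s hs => (hY s (Ico_subset_Icc_self hs)).Ici_of_Icc hs) (fun _ _ => trivial)
    (fun s hs => (hY' s hs).continuousWithinAt)
    (fun s hs => (hY' s (Ico_subset_Icc_self hs)).Ici_of_Icc hs) (fun _ _ => trivial)
    le_rfl t ht

/-- Run the trajectories backwards from time `t`: `s ↦ Y (a + t - s)` solves the ODE with the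
field `-v (a + t - s)`, which has the same Lipschitz constant. -/
theorem dist_le_exp_mul_dist_of_trajectories_rev (hv : ∀ s ∈ Icc a b, LipschitzWith K (v s))
    (hY : ∀ s ∈ Icc a b, HasDerivWithinAt Y (v s (Y s)) (Icc a b) s)
    (hY' : ∀ s ∈ Icc a b, HasDerivWithinAt Y' (v s (Y' s)) (Icc a b) s)
    {t : ℝ} (ht : t ∈ Icc a b) :
    dist (Y a) (Y' a) ≤ Real.exp (K * (t - a)) * dist (Y t) (Y' t) := by
  have hrev : MapsTo (fun s => a + t - s) (Icc a t) (Icc a b) :=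
    fun s hs => ⟨by linarith [hs.2], by linarith [hs.1, ht.2]⟩
  have hrev_deriv : ∀ Z : ℝ → E, (∀ s ∈ Icc a b, HasDerivWithinAt Z (v s (Z s)) (Icc a b) s) →
      ∀ s ∈ Icc a t, HasDerivWithinAt (fun u => Z (a + t - u))
        (-v (a + t - s) (Z (a + t - s))) (Icc a t) s := fun Z hZ s hs => by
    simpa [Function.comp_def] using
      (hZ _ (hrev hs)).scomp s ((hasDerivWithinAt_id s _).const_sub (a + t)) hrev
  simpa using dist_le_exp_mul_dist_of_trajectories (v := fun s y => -v (a + t - s) y)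
    (fun s hs => (hv _ (hrev hs)).neg) (hrev_deriv Y hY) (hrev_deriv Y' hY')
    (right_mem_Icc.2 ht.1)

end Gronwall

/-- The reverse bound `f ≤ c' * g` makes `g` non-integrable whenever `f` is, so the inequality
also holds when both Bochner integrals take the junk value `0`. -/
theorem integral_le_mul_integral_of_le_of_le {α : Type*} [MeasurableSpace α] {μ : Measure α}
    {f g : α → ℝ} {c c' : ℝ} (hf : AEStronglyMeasurable f μ) (hg : AEStronglyMeasurable g μ)
    (hf0 : ∀ x, 0 ≤ f x) (hg0 : ∀ x, 0 ≤ g x) (hgf : ∀ x, g x ≤ c * f x)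
    (hfg : ∀ x, f x ≤ c' * g x) : ∫ x, g x ∂μ ≤ c * ∫ x, f x ∂μ := by
  by_cases hfi : Integrable f μ
  · have hgi : Integrable g μ := (hfi.const_mul c).mono' hg <|
      .of_forall fun x => by simpa [abs_of_nonneg (hg0 x)] using hgf x
    rw [← integral_const_mul]
    exact integral_mono hgi (hfi.const_mul c) hgf
  · have hgi : ¬Integrable g μ := fun hgi => hfi <| (hgi.const_mul c').mono' hf <|
      .of_forall fun x => by simpa [abs_of_nonneg (hf0 x)] using hfg x
    simp [integral_undef hfi, integral_undef hgi]

theorem MeasureTheory.Measure.map_prod_comp_left {α β Θ E : Type*} [MeasurableSpace α]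
    [MeasurableSpace β] [MeasurableSpace Θ] [MeasurableSpace E]
    {π : Measure α} {μ : Measure Θ} [SFinite π] [SFinite μ] {P : α → β} {G : β → Θ → E}
    (hP : Measurable P) (hG : Measurable fun p : β × Θ => G p.1 p.2) :
    (π.prod μ).map (fun q => G (P q.1) q.2) = ((π.map P).prod μ).map fun p => G p.1 p.2 := by
  have hprod := Measure.map_prod_map π μ hP measurable_id
  rw [Measure.map_id] at hprod
  rw [hprod, Measure.map_map hG (hP.prodMap measurable_id)]
  rfl

section Wasserstein

variable {E : Type*} [MeasurableSpace E] [NormedAddCommGroup E]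

theorem W2sq_le_integral {μ ν : Measure E} (π : Measure (E × E)) [IsProbabilityMeasure π]
    (h₁ : π.map Prod.fst = μ) (h₂ : π.map Prod.snd = ν) :
    W2sq μ ν ≤ ∫ p, ‖p.1 - p.2‖ ^ 2 ∂π :=
  csInf_le ⟨0, by rintro r ⟨π, -, -, -, rfl⟩; positivity⟩ ⟨π, ‹_›, h₁, h₂, rfl⟩

theorem W2sq_le_mul_of_forall_coupling {F : Type*} [MeasurableSpace F] [NormedAddCommGroup F]
    {μ ν : Measure E} {μ' ν' : Measure F} [IsProbabilityMeasure μ]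
    [IsProbabilityMeasure ν] {c : ℝ} (hc : 0 ≤ c)
    (h : ∀ π : Measure (E × E), IsProbabilityMeasure π → π.map Prod.fst = μ →
      π.map Prod.snd = ν → W2sq μ' ν' ≤ c * ∫ p, ‖p.1 - p.2‖ ^ 2 ∂π) :
    W2sq μ' ν' ≤ c * W2sq μ ν := by
  refine (le_csInf ?_ ?_).trans_eq (Real.sInf_smul_of_nonneg hc _)
  · exact ⟨_, ⟨_, ⟨μ.prod ν, inferInstance, by simp, by simp, rfl⟩, rfl⟩⟩
  rintro _ ⟨_, ⟨π, hπ, h₁, h₂, rfl⟩, rfl⟩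
  exact h π hπ h₁ h₂

theorem W2_le_of_closedBall [OpensMeasurableSpace E] {ρ ρ' : Measure E} [IsProbabilityMeasure ρ]
    [IsProbabilityMeasure ρ'] {x₀ : E} {δ : ℝ} (hδ : 0 ≤ δ)
    (h : ρ (Metric.closedBall x₀ δ) = 1) (h' : ρ' (Metric.closedBall x₀ δ) = 1) :
    W2 ρ ρ' ≤ 2 * δ := by
  have hB : ∀ {ν : Measure E} [IsProbabilityMeasure ν], ν (Metric.closedBall x₀ δ) = 1 →
      ∀ᵐ x ∂ν, x ∈ Metric.closedBall x₀ δ := fun hν =>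
    (ae_mem_iff_measure_eq measurableSet_closedBall.nullMeasurableSet).2 (by simp [hν])
  have hcost : ∀ᵐ p ∂ρ.prod ρ', ‖p.1 - p.2‖ ^ 2 ≤ (2 * δ) ^ 2 := by
    filter_upwards [Measure.quasiMeasurePreserving_fst.ae (hB h),
      Measure.quasiMeasurePreserving_snd.ae (hB h')] with p hp hp'
    rw [← dist_eq_norm]
    gcongr
    linarith [dist_triangle_right p.1 p.2 x₀, Metric.mem_closedBall.1 hp,
      Metric.mem_closedBall.1 hp']
  have hW2sq : W2sq ρ ρ' ≤ (2 * δ) ^ 2 := calc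
    W2sq ρ ρ' ≤ ∫ p, ‖p.1 - p.2‖ ^ 2 ∂ρ.prod ρ' := W2sq_le_integral _ (by simp) (by simp)
    _ ≤ ∫ _, (2 * δ) ^ 2 ∂ρ.prod ρ' :=
      integral_mono_of_nonneg (.of_forall fun _ => by positivity) (integrable_const _) hcost
    _ = (2 * δ) ^ 2 := by simp
  exact Real.sqrt_le_iff.2 ⟨by positivity, hW2sq⟩

end Wasserstein

section Pushforward

variable {E F Θ : Type*} [NormedAddCommGroup E] [MeasurableSpace E] [BorelSpace E]
  [SecondCountableTopology E] [NormedAddCommGroup F] [MeasurableSpace F] [BorelSpace F]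
  [SecondCountableTopology F] [MeasurableSpace Θ] (μ : Measure Θ) [IsProbabilityMeasure μ]
  {G : E → Θ → F} {L : ℝ}

theorem W2sq_map_prod_le (hG : Measurable fun p : E × Θ => G p.1 p.2)
    (hfwd : ∀ θ x x', dist (G x θ) (G x' θ) ≤ L * dist x x')
    (hbwd : ∀ θ x x', dist x x' ≤ L * dist (G x θ) (G x' θ))
    (ρ ρ' : Measure E) [IsProbabilityMeasure ρ] [IsProbabilityMeasure ρ'] :
    W2sq ((ρ.prod μ).map fun p => G p.1 p.2) ((ρ'.prod μ).map fun p => G p.1 p.2) ≤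
      L ^ 2 * W2sq ρ ρ' := by
  refine W2sq_le_mul_of_forall_coupling (μ := ρ) (ν := ρ') (sq_nonneg L) fun π _ h₁ h₂ => ?_
  have hG₁ : Measurable fun q : (E × E) × Θ => G q.1.1 q.2 :=
    hG.comp (measurable_fst.fst.prodMk measurable_snd)
  have hG₂ : Measurable fun q : (E × E) × Θ => G q.1.2 q.2 :=
    hG.comp (measurable_fst.snd.prodMk measurable_snd)
  have hΦ := hG₁.prodMk hG₂
  have := Measure.isProbabilityMeasure_map (μ := π.prod μ) hΦ.aemeasurable
  have hcost : Measurable fun p : F × F => ‖p.1 - p.2‖ ^ 2 :=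
    (measurable_fst.sub measurable_snd).norm.pow_const 2
  calc _ ≤ ∫ p, ‖p.1 - p.2‖ ^ 2 ∂(π.prod μ).map fun q => (G q.1.1 q.2, G q.1.2 q.2) :=
        W2sq_le_integral _
          (by rw [Measure.map_map measurable_fst hΦ, ← h₁]
              exact Measure.map_prod_comp_left measurable_fst hG)
          (by rw [Measure.map_map measurable_snd hΦ, ← h₂]
              exact Measure.map_prod_comp_left measurable_snd hG)
    _ = ∫ q, ‖G q.1.1 q.2 - G q.1.2 q.2‖ ^ 2 ∂π.prod μ :=
        integral_map hΦ.aemeasurable hcost.aestronglyMeasurable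
    _ ≤ L ^ 2 * ∫ q, ‖q.1.1 - q.1.2‖ ^ 2 ∂π.prod μ :=
        integral_le_mul_integral_of_le_of_le (c' := L ^ 2)
          ((measurable_fst.fst.sub measurable_fst.snd).norm.pow_const 2).aestronglyMeasurable
          (hcost.comp hΦ).aestronglyMeasurable (fun _ => by positivity) (fun _ => by positivity)
          (fun q => by
            simpa only [dist_eq_norm, mul_pow] using
              pow_le_pow_left₀ dist_nonneg (hfwd q.2 q.1.1 q.1.2) 2)
          (fun q => by
            simpa only [dist_eq_norm, mul_pow] using
              pow_le_pow_left₀ dist_nonneg (hbwd q.2 q.1.1 q.1.2) 2)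
    _ = L ^ 2 * ∫ p, ‖p.1 - p.2‖ ^ 2 ∂π := by
        rw [integral_fun_fst fun p : E × E => ‖p.1 - p.2‖ ^ 2]
        simp

theorem W2_map_prod_le (hG : Measurable fun p : E × Θ => G p.1 p.2) (hL : 0 ≤ L)
    (hfwd : ∀ θ x x', dist (G x θ) (G x' θ) ≤ L * dist x x')
    (hbwd : ∀ θ x x', dist x x' ≤ L * dist (G x θ) (G x' θ))
    (ρ ρ' : Measure E) [IsProbabilityMeasure ρ] [IsProbabilityMeasure ρ'] :
    W2 ((ρ.prod μ).map fun p => G p.1 p.2) ((ρ'.prod μ).map fun p => G p.1 p.2) ≤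
      L * W2 ρ ρ' := by
  rw [W2, W2, ← Real.sqrt_sq hL, ← Real.sqrt_mul (sq_nonneg L)]
  exact Real.sqrt_le_sqrt (W2sq_map_prod_le μ hG hfwd hbwd ρ ρ')

end Pushforward

theorem ode_W2_initial_condition_stability_general
    {d l : ℕ} (C T : ℝ) (hC : 0 < C)
    (f : EuclideanSpace ℝ (Fin d) → ℝ → EuclideanSpace ℝ (Fin l) → EuclideanSpace ℝ (Fin d))
    (hLip : ∀ (x xhat : EuclideanSpace ℝ (Fin d)) (θ θhat : EuclideanSpace ℝ (Fin l)),
      ∀ t ∈ Icc (0 : ℝ) T,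
      ∑ i, |f x t θ i - f xhat t θhat i| ≤ C * (‖x - xhat‖ + ‖θ - θhat‖))
    (X : ℝ → EuclideanSpace ℝ (Fin l) → EuclideanSpace ℝ (Fin d) → EuclideanSpace ℝ (Fin d))
    (hX0 : ∀ θ x₀, X 0 θ x₀ = x₀)
    (hXode : ∀ θ x₀, ∀ t ∈ Icc (0 : ℝ) T,
      HasDerivWithinAt (fun s => X s θ x₀) (f (X t θ x₀) t θ) (Icc 0 T) t)
    (hXcont : ContinuousOn
      (fun p : ℝ × EuclideanSpace ℝ (Fin l) × EuclideanSpace ℝ (Fin d) => X p.1 p.2.1 p.2.2)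
      (Icc 0 T ×ˢ univ ×ˢ univ))
    (μ : Measure (EuclideanSpace ℝ (Fin l))) (hμ : IsProbabilityMeasure μ) :
    ∃ C₀ > (0 : ℝ),
      ∀ ρ ρ' : Measure (EuclideanSpace ℝ (Fin d)),
        IsProbabilityMeasure ρ → IsProbabilityMeasure ρ' →
        Integrable (fun x => ‖x‖ ^ 2) ρ → Integrable (fun x => ‖x‖ ^ 2) ρ' →
        ∀ t ∈ Icc (0 : ℝ) T,
          W2 ((ρ.prod μ).map fun p => X t p.2 p.1) ((ρ'.prod μ).map fun p => X t p.2 p.1) ≤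
              Real.exp (C₀ * t / 2) * W2 ρ ρ' ∧
          (∀ (δ : ℝ) (x₀ : EuclideanSpace ℝ (Fin d)), 0 < δ →
            ρ (Metric.closedBall x₀ δ) = 1 → ρ' (Metric.closedBall x₀ δ) = 1 →
            W2 ((ρ.prod μ).map fun p => X t p.2 p.1)
                ((ρ'.prod μ).map fun p => X t p.2 p.1) ≤
              2 * δ * Real.exp (C₀ * t / 2)) := by
  refine ⟨2 * C, by positivity, fun ρ ρ' _ _ _ _ t ht => ?_⟩
  have hv : ∀ θ, ∀ s ∈ Icc 0 T, LipschitzWith C.toNNReal fun y => f y s θ := fun θ s hs =>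
    EuclideanSpace.lipschitzWith_of_sum_abs_sub_le fun x y => by
      simpa [hC.le] using hLip x y θ θ s hs
  have hX : Measurable fun p : EuclideanSpace ℝ (Fin d) × EuclideanSpace ℝ (Fin l) =>
      X t p.2 p.1 :=
    (hXcont.comp_continuous (continuous_const.prodMk (continuous_snd.prodMk continuous_fst))
      fun _ => ⟨ht, trivial, trivial⟩).measurable
  have hW2 := W2_map_prod_le μ hX (Real.exp_pos (C * t)).le
    (fun θ x x' => by
      simpa [hX0, hC.le] using
        dist_le_exp_mul_dist_of_trajectories (hv θ) (hXode θ x) (hXode θ x') ht)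
    (fun θ x x' => by
      simpa [hX0, hC.le] using
        dist_le_exp_mul_dist_of_trajectories_rev (hv θ) (hXode θ x) (hXode θ x') ht)
    ρ ρ'
  rw [show 2 * C * t / 2 = C * t by ring]
  refine ⟨hW2, fun δ x₀ hδ h h' => hW2.trans ?_⟩
  rw [mul_comm]
  gcongr
  exact W2_le_of_closedBall hδ.le h h'

/-- ODE specialization of the initial-condition stability estimates
Eqs. (C.11)–(C.12) in the proof of Theorem 2.2: fixing a parameter distribution `μ`,
the `W₂`-distance between the pushforwards of `ρ ⊗ μ` and `ρ′ ⊗ μ` under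
`(x, θ) ↦ X(t; θ, x)` is at most `e^{C₀ t / 2} · W₂(ρ, ρ′)`; in particular, if `ρ, ρ′`
are both supported in a closed ball of radius `δ`, it is at most `2 δ e^{C₀ t / 2}`. -/
theorem ode_W2_initial_condition_stability
    {d l : ℕ} (C T : ℝ) (hC : 0 < C) (hT : 0 < T)
    (f : EuclideanSpace ℝ (Fin d) → ℝ → EuclideanSpace ℝ (Fin l) → EuclideanSpace ℝ (Fin d))
    (hf_cont : ContinuousOn
      (fun p : EuclideanSpace ℝ (Fin d) × ℝ × EuclideanSpace ℝ (Fin l) => f p.1 p.2.1 p.2.2)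
      (univ ×ˢ Icc 0 T ×ˢ univ))
    (hLip : ∀ (x xhat : EuclideanSpace ℝ (Fin d)) (θ θhat : EuclideanSpace ℝ (Fin l)),
      ∀ t ∈ Icc (0 : ℝ) T,
      ∑ i, |f x t θ i - f xhat t θhat i| ≤ C * (‖x - xhat‖ + ‖θ - θhat‖))
    (hM₀ : ∃ M₀ : ℝ, ∀ t ∈ Icc (0 : ℝ) T, ∑ i, |f 0 t 0 i| ≤ M₀)
    (X : ℝ → EuclideanSpace ℝ (Fin l) → EuclideanSpace ℝ (Fin d) → EuclideanSpace ℝ (Fin d))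
    (hX0 : ∀ θ x₀, X 0 θ x₀ = x₀)
    (hXode : ∀ θ x₀, ∀ t ∈ Icc (0 : ℝ) T,
      HasDerivWithinAt (fun s => X s θ x₀) (f (X t θ x₀) t θ) (Icc 0 T) t)
    (hXcont : ContinuousOn
      (fun p : ℝ × EuclideanSpace ℝ (Fin l) × EuclideanSpace ℝ (Fin d) => X p.1 p.2.1 p.2.2)
      (Icc 0 T ×ˢ univ ×ˢ univ))
    (μ : Measure (EuclideanSpace ℝ (Fin l))) (hμ : IsProbabilityMeasure μ)
    (hμmom : Integrable (fun θ => ‖θ‖ ^ 2) μ) :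
    ∃ C₀ > (0 : ℝ),
      ∀ ρ ρ' : Measure (EuclideanSpace ℝ (Fin d)),
        IsProbabilityMeasure ρ → IsProbabilityMeasure ρ' →
        Integrable (fun x => ‖x‖ ^ 2) ρ → Integrable (fun x => ‖x‖ ^ 2) ρ' →
        ∀ t ∈ Icc (0 : ℝ) T,
          W2 ((ρ.prod μ).map fun p => X t p.2 p.1) ((ρ'.prod μ).map fun p => X t p.2 p.1) ≤
              Real.exp (C₀ * t / 2) * W2 ρ ρ' ∧
          (∀ (δ : ℝ) (x₀ : EuclideanSpace ℝ (Fin d)), 0 < δ →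
            ρ (Metric.closedBall x₀ δ) = 1 → ρ' (Metric.closedBall x₀ δ) = 1 →
            W2 ((ρ.prod μ).map fun p => X t p.2 p.1)
                ((ρ'.prod μ).map fun p => X t p.2 p.1) ≤
              2 * δ * Real.exp (C₀ * t / 2)) :=
  ode_W2_initial_condition_stability_general C T hC f hLip X hX0 hXode hXcont μ hμ
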